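/- For every α ≥ 1/2 and all real numbers s, t ≥ 0, one has the Young-type inequality s·t ≤ s·e^{s/(2α)} + 2α·t·(log(e+t))^{2α}. -/

import Mathlib

/-! Either `t ≤ e^{s/a}`, and then `s t ≤ s e^{s/a}`, or `s < a log t ≤ a log (e + t)`, and then
`s t ≤ a t log (e + t) ≤ a t (log (e + t))^a` because `log (e + t) ≥ 1` and `a ≥ 1`.
So one of the two terms alone dominates `s t`. -/

open Real

lemma one_le_log_exp_one_add {t : ℝ} (ht : 0 ≤ t) : 1 ≤ log (exp 1 + t) := by
  simpa only [log_exp] using log_le_log (exp_pos 1) (le_add_of_nonneg_right ht)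

lemma le_mul_log_exp_one_add_of_exp_div_lt {a s t : ℝ} (ha : 0 < a) (h : exp (s / a) < t) :
    s ≤ a * log (exp 1 + t) := by
  have ht : 0 < t := (exp_pos _).trans h
  have hlog : s / a < log (exp 1 + t) :=
    calc s / a < log t := (lt_log_iff_exp_lt ht).2 h
      _ ≤ log (exp 1 + t) := log_le_log ht (by linarith [exp_pos 1])
  rw [div_lt_iff₀ ha] at hlog
  linarith

lemma mul_le_mul_exp_add_mul_mul_log {a s t : ℝ} (ha : 0 < a) (hs : 0 ≤ s) (ht : 0 ≤ t) :
    s * t ≤ s * exp (s / a) + a * (t * log (exp 1 + t)) := by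
  have hL : 0 ≤ log (exp 1 + t) := zero_le_one.trans (one_le_log_exp_one_add ht)
  rcases le_or_gt t (exp (s / a)) with h | h
  · have := mul_le_mul_of_nonneg_left h hs
    have : 0 ≤ a * (t * log (exp 1 + t)) := by positivity
    linarith
  · have := mul_le_mul_of_nonneg_right (le_mul_log_exp_one_add_of_exp_div_lt ha h) ht
    have : 0 ≤ s * exp (s / a) := by positivity
    linarith

lemma mul_le_mul_exp_add_mul_mul_log_rpow {a s t : ℝ} (ha : 1 ≤ a) (hs : 0 ≤ s) (ht : 0 ≤ t) :
    s * t ≤ s * exp (s / a) + a * (t * log (exp 1 + t) ^ a) := by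
  have hpow : log (exp 1 + t) ≤ log (exp 1 + t) ^ a := by
    simpa only [rpow_one] using rpow_le_rpow_of_exponent_le (one_le_log_exp_one_add ht) ha
  calc s * t ≤ s * exp (s / a) + a * (t * log (exp 1 + t)) :=
        mul_le_mul_exp_add_mul_mul_log (by linarith) hs ht
    _ ≤ s * exp (s / a) + a * (t * log (exp 1 + t) ^ a) := by gcongr

/-- For every `α ≥ 1/2` and all reals `s, t ≥ 0`, one has the
Young-type inequality `s·t ≤ s·e^{s/(2α)} + 2α·t·(log(e+t))^{2α}`. -/
theorem young_type_inequality_legendre (α s t : ℝ) (hα : 1/2 ≤ α)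
    (hs : 0 ≤ s) (ht : 0 ≤ t) :
    s * t ≤ s * Real.exp (s / (2*α)) + 2*α * (t * Real.log (Real.exp 1 + t) ^ (2*α)) :=
  mul_le_mul_exp_add_mul_mul_log_rpow (by linarith) hs ht
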